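/- Let Ω be an r.e. infinite set and P a discrete probability space on Ω. Let α be Martin-Löf P-random, and let f be a partial computable function from Ω* to {YES, NO} such that f(α↾k) is defined for all k and {k : f(α↾k) = YES} is infinite. Then the sequence β of selected elements, β(k) = α(s_f(α,k)+1) where s_f(α,k) is the k-th index ℓ with f(α↾ℓ) = YES, is Martin-Löf P-random. (Closure under selection by partial computable generalized selection functions.) -/

import Mathlib

open scoped ENNReal

/-- A set of finite strings is prefix-free. -/
def prefixFree {Γ : Type*} (E : Set (List Γ)) : Prop :=
  ∀ σ ∈ E, ∀ τ ∈ E, σ <+: τ → σ = τ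

/-- The prefix of length `n` of an infinite sequence. -/
def pre {Γ : Type*} (α : ℕ → Γ) (n : ℕ) : List Γ := List.ofFn fun i : Fin n => α i

/-- The open set generated by a set of strings: sequences having some prefix in `S`. -/
def cyl {Γ : Type*} (S : Set (List Γ)) : Set (ℕ → Γ) := {α | ∃ n, pre α n ∈ S}

/-- The (generalized) Bernoulli probability of a finite string:
`P(σ₁)···P(σₙ)`. -/
def strP {Γ : Type*} (P : Γ → ℝ) (σ : List Γ) : ℝ := (σ.map P).prod

/-- The `λ_P`-measure of the open set generated by a prefix-free set `S`. -/
noncomputable def mOpen {Γ : Type*} (P : Γ → ℝ) (S : Set (List Γ)) : ℝ≥0∞ :=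
  ∑' σ : S, ENNReal.ofReal (strP P (σ : List Γ))

/-- All symbols of the string belong to the alphabet `O`. -/
def strIn {Γ : Type*} (O : Set Γ) (σ : List Γ) : Prop := ∀ a ∈ σ, a ∈ O

/-- All symbols of the sequence belong to the alphabet `O`. -/
def seqIn {Γ : Type*} (O : Set Γ) (α : ℕ → Γ) : Prop := ∀ n, α n ∈ O

/-- `P` is a discrete probability space on the alphabet `O`. -/
def isProb {Γ : Type*} (O : Set Γ) (P : Γ → ℝ) : Prop :=
  (∀ a ∈ O, 0 ≤ P a) ∧ HasSum (fun a : O => P (a : Γ)) 1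

/-- The combinatorial conditions on a Martin-Löf `P`-test: sections consist of strings
over the alphabet, are prefix-free, and have `λ_P`-measure `< 2⁻ⁿ`. -/
def isTestSet {Γ : Type*} (O : Set Γ) (P : Γ → ℝ) (C : Set (ℕ × List Γ)) : Prop :=
  (∀ x ∈ C, strIn O x.2) ∧
  ∀ n : ℕ, 1 ≤ n → prefixFree {σ | (n, σ) ∈ C} ∧
    mOpen P {σ | (n, σ) ∈ C} < (2 : ℝ≥0∞)⁻¹ ^ n

/-- A Martin-Löf `P`-test: an r.e. subset of `ℕ⁺ × Ω*` satisfying the test conditions. -/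
def MLTest {Γ : Type*} [Primcodable Γ] (O : Set Γ) (P : Γ → ℝ)
    (C : Set (ℕ × List Γ)) : Prop :=
  REPred (· ∈ C) ∧ isTestSet O P C

/-- `α` is Martin-Löf `P`-random: it passes every Martin-Löf `P`-test. -/
def MLRandom {Γ : Type*} [Primcodable Γ] (O : Set Γ) (P : Γ → ℝ) (α : ℕ → Γ) : Prop :=
  ∀ C : Set (ℕ × List Γ), MLTest O P C → ∃ n, 1 ≤ n ∧ α ∉ cyl {σ | (n, σ) ∈ C}

/-!
A test `C` for the selected sequence is pulled back along the selection rule: level `n` of the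
new test consists of the strings `τ` over `Ω` on whose proper prefixes `f` is defined, whose last
symbol is selected, and whose selected subsequence lies in `C_n`. If the selected sequence failed
`C` at level `n`, then `α` would fail the pulled-back test at level `n`.

The pulled-back test is r.e. because selection along `f` is partial computable. Its levels have
small measure because selection does not increase `λ_P`-measure: by induction on `σ`, the minimal
strings whose selection is `σ` weigh at most `λ_P(σ)`. The induction step covers the strings at
which the next symbol is about to be selected by the minimal strings of the previous stage and
applies Kraft's inequality inside each of their cylinders.
-/

section Weights

variable {Γ : Type*} {O : Set Γ} {P : Γ → ℝ} {S T : Set (List Γ)}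

@[simp] lemma strP_nil (P : Γ → ℝ) : strP P [] = 1 := rfl

@[simp] lemma strP_cons (P : Γ → ℝ) (a : Γ) (σ : List Γ) : strP P (a :: σ) = P a * strP P σ := by
  simp [strP]

@[simp] lemma strP_append (P : Γ → ℝ) (σ τ : List Γ) : strP P (σ ++ τ) = strP P σ * strP P τ := by
  simp [strP]

lemma strP_nonneg (hP : ∀ a ∈ O, 0 ≤ P a) {σ : List Γ} (hσ : strIn O σ) : 0 ≤ strP P σ :=
  List.prod_nonneg <| by simpa using fun a ha => hP a (hσ a ha)

lemma strIn_append {σ τ : List Γ} : strIn O (σ ++ τ) ↔ strIn O σ ∧ strIn O τ := by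
  simp [strIn, or_imp, forall_and]

lemma isProb.tsum_ofReal_eq_one (hP : isProb O P) : ∑' a : O, ENNReal.ofReal (P a) = 1 := by
  rw [← ENNReal.ofReal_tsum_of_nonneg (f := fun a : O => P a) (fun a => hP.1 a a.2)
    hP.2.summable, hP.2.tsum_eq, ENNReal.ofReal_one]

lemma prefixFree.mono (hT : prefixFree T) (h : S ⊆ T) : prefixFree S :=
  fun σ hσ τ hτ => hT σ (h hσ) τ (h hτ)

lemma prefixFree.append_left (hS : prefixFree S) (τ : List Γ) : prefixFree {σ | τ ++ σ ∈ S} :=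
  fun _ hσ _ hσ' h => List.append_cancel_left (hS _ hσ _ hσ' ((List.prefix_append_right_inj τ).2 h))

lemma mOpen_mono (h : S ⊆ T) : mOpen P S ≤ mOpen P T :=
  ENNReal.tsum_mono_subtype (fun σ => ENNReal.ofReal (strP P σ)) h

@[simp] lemma mOpen_singleton (σ : List Γ) : mOpen P {σ} = ENNReal.ofReal (strP P σ) :=
  tsum_singleton σ fun σ => ENNReal.ofReal (strP P σ)

lemma mOpen_biUnion_le {ι : Type*} (I : Set ι) (S : ι → Set (List Γ)) :
    mOpen P (⋃ i ∈ I, S i) ≤ ∑' i : I, mOpen P (S i) :=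
  ENNReal.tsum_biUnion_le_tsum (fun σ => ENNReal.ofReal (strP P σ)) I S

lemma mOpen_image_append_left {τ : List Γ} (hτ : 0 ≤ strP P τ) (S : Set (List Γ)) :
    mOpen P ((τ ++ ·) '' S) = ENNReal.ofReal (strP P τ) * mOpen P S := by
  rw [mOpen, tsum_image (fun σ => ENNReal.ofReal (strP P σ)) (List.append_right_injective τ).injOn,
    mOpen, ← ENNReal.tsum_mul_left]
  simp only [strP_append, ENNReal.ofReal_mul hτ]

lemma mOpen_image_append_right {τ : List Γ} (hτ : 0 ≤ strP P τ) (S : Set (List Γ)) :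
    mOpen P ((· ++ τ) '' S) = mOpen P S * ENNReal.ofReal (strP P τ) := by
  rw [mOpen, tsum_image (fun σ => ENNReal.ofReal (strP P σ)) (List.append_left_injective τ).injOn,
    mOpen, ← ENNReal.tsum_mul_right]
  simp only [strP_append, ENNReal.ofReal_mul' hτ]

lemma mOpen_le_of_forall_length_le {c : ℝ≥0∞}
    (h : ∀ N, mOpen P {σ | σ ∈ S ∧ σ.length ≤ N} ≤ c) : mOpen P S ≤ c := by
  refine ENNReal.tsum_eq_iSup_sum.trans_le (iSup_le fun F => ?_)
  set N := F.sup fun σ => (σ : List Γ).length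
  let ι : F → {σ | σ ∈ S ∧ σ.length ≤ N} := fun σ =>
    ⟨σ.1.1, σ.1.2, F.le_sup (f := fun σ : S => σ.1.length) σ.2⟩
  calc ∑ σ ∈ F, ENNReal.ofReal (strP P σ)
      = ∑' σ : F, ENNReal.ofReal (strP P σ.1) := (F.tsum_subtype _).symm
    _ ≤ mOpen P {σ | σ ∈ S ∧ σ.length ≤ N} :=
        ENNReal.tsum_comp_le_tsum_of_injective (f := ι)
          (fun σ τ h => Subtype.ext (Subtype.ext (congrArg (fun x => x.1) h))) _
    _ ≤ c := h N

lemma mOpen_le_one_of_subset_nil (h : S ⊆ {[]}) : mOpen P S ≤ 1 :=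
  (mOpen_mono h).trans (by simp)

lemma subset_biUnion_image_cons (hnil : [] ∉ S) (hS : ∀ σ ∈ S, strIn O σ) :
    S ⊆ ⋃ a ∈ O, ([a] ++ ·) '' {σ | [a] ++ σ ∈ S} := by
  rintro (_ | ⟨a, σ⟩) hσ
  · exact absurd hσ hnil
  · exact Set.mem_biUnion (hS _ hσ a List.mem_cons_self) ⟨σ, hσ, rfl⟩

/-- Kraft's inequality for bounded lengths, by splitting off the first symbol. -/
lemma mOpen_le_one_of_length_le (hP : isProb O P) (N : ℕ) :
    ∀ S : Set (List Γ), prefixFree S → (∀ σ ∈ S, strIn O σ) → (∀ σ ∈ S, σ.length ≤ N) →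
      mOpen P S ≤ 1 := by
  induction N with
  | zero =>
    refine fun S _ _ hN => mOpen_le_one_of_subset_nil fun σ hσ => ?_
    simpa using hN σ hσ
  | succ N ih =>
    intro S hpf hO hN
    by_cases hnil : [] ∈ S
    · exact mOpen_le_one_of_subset_nil fun σ hσ => (hpf _ hnil _ hσ List.nil_prefix).symm
    calc mOpen P S ≤ mOpen P (⋃ a ∈ O, ([a] ++ ·) '' {σ | [a] ++ σ ∈ S}) :=
          mOpen_mono (subset_biUnion_image_cons hnil hO)
      _ ≤ ∑' a : O, mOpen P (([(a : Γ)] ++ ·) '' {σ | [(a : Γ)] ++ σ ∈ S}) := mOpen_biUnion_le _ _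
      _ = ∑' a : O, ENNReal.ofReal (P a) * mOpen P {σ | [(a : Γ)] ++ σ ∈ S} :=
          tsum_congr fun a => by
            rw [mOpen_image_append_left (τ := [(a : Γ)]) (by simpa using hP.1 a a.2)]; simp
      _ ≤ ∑' a : O, ENNReal.ofReal (P a) := by
          refine ENNReal.tsum_le_tsum fun a => mul_le_of_le_one_right' (ih _ (hpf.append_left _)
            (fun σ hσ => (strIn_append.1 (hO _ hσ)).2) fun σ hσ => ?_)
          have := hN _ hσ
          simp only [List.length_append, List.length_singleton] at this
          omega
      _ = 1 := hP.tsum_ofReal_eq_one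

theorem mOpen_le_one_of_prefixFree (hP : isProb O P) (hS : prefixFree S)
    (hO : ∀ σ ∈ S, strIn O σ) : mOpen P S ≤ 1 :=
  mOpen_le_of_forall_length_le fun N => mOpen_le_one_of_length_le hP N _
    (hS.mono fun _ h => h.1) (fun σ h => hO σ h.1) fun _ h => h.2

lemma mOpen_le_strP_of_forall_prefix (hP : isProb O P) {τ : List Γ} (hτ : strIn O τ)
    (hS : prefixFree S) (hO : ∀ σ ∈ S, strIn O σ) (hext : ∀ σ ∈ S, τ <+: σ) :
    mOpen P S ≤ ENNReal.ofReal (strP P τ) :=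
  calc mOpen P S ≤ mOpen P ((τ ++ ·) '' {σ | τ ++ σ ∈ S}) := mOpen_mono fun σ hσ => by
        obtain ⟨ρ, rfl⟩ := hext σ hσ
        exact ⟨ρ, hσ, rfl⟩
    _ = ENNReal.ofReal (strP P τ) * mOpen P {σ | τ ++ σ ∈ S} :=
        mOpen_image_append_left (strP_nonneg hP.1 hτ) _
    _ ≤ ENNReal.ofReal (strP P τ) :=
        mul_le_of_le_one_right' <| mOpen_le_one_of_prefixFree hP (hS.append_left τ)
          fun σ hσ => (strIn_append.1 (hO _ hσ)).2

theorem mOpen_le_of_forall_exists_prefix (hP : isProb O P) (hS : prefixFree S)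
    (hSO : ∀ σ ∈ S, strIn O σ) (hTO : ∀ τ ∈ T, strIn O τ) (hcov : ∀ σ ∈ S, ∃ τ ∈ T, τ <+: σ) :
    mOpen P S ≤ mOpen P T :=
  calc mOpen P S ≤ mOpen P (⋃ τ ∈ T, {σ | σ ∈ S ∧ τ <+: σ}) := mOpen_mono fun σ hσ => by
        obtain ⟨τ, hτ, h⟩ := hcov σ hσ
        exact Set.mem_biUnion hτ ⟨hσ, h⟩
    _ ≤ ∑' τ : T, mOpen P {σ | σ ∈ S ∧ τ <+: σ} := mOpen_biUnion_le _ _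
    _ ≤ mOpen P T := ENNReal.tsum_le_tsum fun τ =>
        mOpen_le_strP_of_forall_prefix hP (hTO τ τ.2) (hS.mono fun _ h => h.1)
          (fun σ h => hSO σ h.1) fun _ h => h.2

end Weights

section Selection

variable {Γ : Type*} (g : List Γ → Bool)

/-- The symbol following a prefix `ρ` is selected iff `g ρ = true`; `p` is the prefix already
read. -/
def selectFrom : List Γ → List Γ → List Γ
  | _, [] => []
  | p, a :: τ => (if g p then [a] else []) ++ selectFrom (p ++ [a]) τ

def select (τ : List Γ) : List Γ := selectFrom g [] τ

lemma selectFrom_append (p σ τ : List Γ) :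
    selectFrom g p (σ ++ τ) = selectFrom g p σ ++ selectFrom g (p ++ σ) τ := by
  induction σ generalizing p with
  | nil => simp [selectFrom]
  | cons a σ ih => simp [selectFrom, ih]

@[simp] lemma select_nil : select g ([] : List Γ) = [] := rfl

lemma select_append (σ τ : List Γ) : select g (σ ++ τ) = select g σ ++ selectFrom g σ τ :=
  selectFrom_append g [] σ τ

lemma select_append_singleton (σ : List Γ) (a : Γ) :
    select g (σ ++ [a]) = select g σ ++ if g σ then [a] else [] := by
  simp [select_append, selectFrom]

variable {g}

lemma select_prefix {σ τ : List Γ} (h : σ <+: τ) : select g σ <+: select g τ := by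
  obtain ⟨ρ, rfl⟩ := h
  rw [select_append]
  exact List.prefix_append _ _

lemma exists_eq_append_singleton_iff {p : List Γ → Prop} {τ : List Γ} :
    (∃ τ₀ a, τ = τ₀ ++ [a] ∧ p τ₀) ↔ τ ≠ [] ∧ p τ.dropLast := by
  constructor
  · rintro ⟨τ₀, a, rfl, h⟩
    simpa using h
  · rintro ⟨hne, h⟩
    exact ⟨τ.dropLast, τ.getLast hne, (List.dropLast_append_getLast hne).symm, h⟩

end Selection

section SelectionWeights

variable {Γ : Type*} (O : Set Γ) (g : List Γ → Bool)

def nextSelected (ρ : List Γ) : Set (List Γ) :=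
  {τ | strIn O τ ∧ g τ = true ∧ select g τ = ρ}

def lastSelected (σ : List Γ) : Set (List Γ) :=
  {τ | strIn O τ ∧ select g τ = σ ∧ ∃ τ₀ a, τ = τ₀ ++ [a] ∧ g τ₀ = true}

variable {O g}

lemma select_eq_of_mem_lastSelected {σ τ₀ : List Γ} {a : Γ}
    (h : τ₀ ++ [a] ∈ lastSelected O g σ) : select g τ₀ ++ [a] = σ := by
  obtain ⟨-, hsel, τ₁, b, he, hg⟩ := h
  obtain ⟨rfl, hab⟩ := List.append_inj' he rfl
  obtain rfl : a = b := by simpa using hab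
  simpa [select_append_singleton, hg] using hsel

lemma nextSelected_prefixFree (ρ : List Γ) : prefixFree (nextSelected O g ρ) := by
  rintro τ ⟨-, hg, hsel⟩ _ ⟨-, -, hsel'⟩ ⟨_ | ⟨a, ρ'⟩, rfl⟩
  · simp
  · simp [select_append, selectFrom, hg, hsel] at hsel'

lemma lastSelected_prefixFree (σ : List Γ) : prefixFree (lastSelected O g σ) := by
  rintro τ hτ _ hτ' ⟨ρ, rfl⟩
  rcases List.eq_nil_or_concat ρ with rfl | ⟨ρ₀, a, rfl⟩
  · simp
  · exfalso
    have hlen := (select_prefix (g := g) (List.prefix_append τ ρ₀)).length_le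
    rw [List.concat_eq_append, ← List.append_assoc] at hτ'
    have := congrArg List.length (select_eq_of_mem_lastSelected hτ')
    rw [hτ.2.1] at hlen
    simp at this
    omega

lemma lastSelected_nil : lastSelected O g [] = ∅ :=
  Set.eq_empty_of_forall_notMem fun τ hτ => by
    obtain ⟨τ₀, a, rfl, -⟩ := hτ.2.2
    simpa using select_eq_of_mem_lastSelected hτ

lemma lastSelected_append_singleton_subset (ρ : List Γ) (a : Γ) :
    lastSelected O g (ρ ++ [a]) ⊆ (· ++ [a]) '' nextSelected O g ρ := by
  intro τ hτ
  obtain ⟨hO, -, τ₀, b, rfl, hg⟩ := id hτ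
  obtain ⟨hsel, hab⟩ := List.append_inj' (select_eq_of_mem_lastSelected hτ) rfl
  obtain rfl : b = a := by simpa using hab
  exact ⟨τ₀, ⟨(strIn_append.1 hO).1, hg, hsel⟩, rfl⟩

lemma exists_lastSelected_prefix {σ : List Γ} (hσ : σ ≠ []) :
    ∀ τ, strIn O τ → select g τ = σ → ∃ τ' ∈ lastSelected O g σ, τ' <+: τ := by
  intro τ
  induction τ using List.reverseRecOn with
  | nil => exact fun _ h => absurd h.symm hσ
  | append_singleton τ a ih =>
    intro hO hsel
    by_cases hg : g τ = true
    · exact ⟨τ ++ [a], ⟨hO, hsel, τ, a, rfl, hg⟩, List.prefix_refl _⟩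
    · rw [select_append_singleton, if_neg hg, List.append_nil] at hsel
      obtain ⟨τ', hτ', h⟩ := ih (strIn_append.1 hO).1 hsel
      exact ⟨τ', hτ', h.trans (List.prefix_append _ _)⟩

variable {P : Γ → ℝ}

/-- Selection does not increase `λ_P`-measure. -/
theorem mOpen_lastSelected_le (hP : isProb O P) (σ : List Γ) (hσ : strIn O σ) :
    mOpen P (lastSelected O g σ) ≤ ENNReal.ofReal (strP P σ) := by
  induction σ using List.reverseRecOn with
  | nil => simp [lastSelected_nil, mOpen]
  | append_singleton ρ a ih =>
    obtain ⟨hρ, ha⟩ := strIn_append.1 hσ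
    have hPa : 0 ≤ strP P [a] := by simpa using hP.1 a (ha a List.mem_cons_self)
    have hnext : mOpen P (nextSelected O g ρ) ≤ ENNReal.ofReal (strP P ρ) := by
      rcases eq_or_ne ρ [] with rfl | hne
      · simpa using mOpen_le_one_of_prefixFree hP (nextSelected_prefixFree []) fun τ h => h.1
      · refine (mOpen_le_of_forall_exists_prefix hP (nextSelected_prefixFree ρ)
          (fun τ h => h.1) (fun τ h => h.1) fun τ h => ?_).trans (ih hρ)
        exact exists_lastSelected_prefix hne τ h.1 h.2.2
    calc mOpen P (lastSelected O g (ρ ++ [a]))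
        ≤ mOpen P ((· ++ [a]) '' nextSelected O g ρ) :=
          mOpen_mono (lastSelected_append_singleton_subset ρ a)
      _ = mOpen P (nextSelected O g ρ) * ENNReal.ofReal (strP P [a]) :=
          mOpen_image_append_right hPa _
      _ ≤ ENNReal.ofReal (strP P ρ) * ENNReal.ofReal (strP P [a]) := by gcongr
      _ = ENNReal.ofReal (strP P (ρ ++ [a])) := by rw [strP_append, ENNReal.ofReal_mul' hPa]

end SelectionWeights

section PullbackTest

variable {Γ : Type*}

open Classical in
/-- Reads `f σ` as a total answer, an undefined value counting as NO. -/
noncomputable def isYes (f : List Γ →. Bool) (σ : List Γ) : Bool := decide (true ∈ f σ)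

@[simp] lemma isYes_eq_true {f : List Γ →. Bool} {σ : List Γ} :
    isYes f σ = true ↔ true ∈ f σ := by
  simp [isYes]

lemma isYes_eq_of_mem {f : List Γ →. Bool} {σ : List Γ} {b : Bool} (hb : b ∈ f σ) :
    isYes f σ = b := by
  cases b
  · simpa [isYes] using fun h => Bool.false_ne_true (Part.mem_unique hb h)
  · simpa using hb

/-- The test for `α` induced by a test `C` for the sequence selected from `α` by `f`. -/
def pullbackTest (O : Set Γ) (f : List Γ →. Bool) (C : Set (ℕ × List Γ)) : Set (ℕ × List Γ) :=
  {x | (∀ i < x.2.length, (f (x.2.take i)).Dom) ∧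
    x.2 ∈ lastSelected O (isYes f) (select (isYes f) x.2) ∧ (x.1, select (isYes f) x.2) ∈ C}

variable {O : Set Γ} {P : Γ → ℝ} {f : List Γ →. Bool} {C : Set (ℕ × List Γ)}

lemma section_pullbackTest_subset (n : ℕ) :
    {τ | (n, τ) ∈ pullbackTest O f C} ⊆ ⋃ σ ∈ {σ | (n, σ) ∈ C}, lastSelected O (isYes f) σ :=
  fun _ hτ => Set.mem_biUnion hτ.2.2 hτ.2.1

lemma prefixFree_section_pullbackTest {n : ℕ} (hC : prefixFree {σ | (n, σ) ∈ C}) :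
    prefixFree {τ | (n, τ) ∈ pullbackTest O f C} := by
  intro τ hτ τ' hτ' h
  have heq := hC _ hτ.2.2 _ hτ'.2.2 (select_prefix h)
  exact lastSelected_prefixFree _ τ (heq ▸ hτ.2.1) τ' hτ'.2.1 h

theorem isTestSet_pullbackTest (hP : isProb O P) (hC : isTestSet O P C) :
    isTestSet O P (pullbackTest O f C) := by
  refine ⟨fun x hx => hx.2.1.1, fun n hn => ⟨prefixFree_section_pullbackTest (hC.2 n hn).1, ?_⟩⟩
  calc mOpen P {τ | (n, τ) ∈ pullbackTest O f C}
      ≤ mOpen P (⋃ σ ∈ {σ | (n, σ) ∈ C}, lastSelected O (isYes f) σ) :=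
        mOpen_mono (section_pullbackTest_subset n)
    _ ≤ ∑' σ : {σ | (n, σ) ∈ C}, mOpen P (lastSelected O (isYes f) σ) := mOpen_biUnion_le _ _
    _ ≤ mOpen P {σ | (n, σ) ∈ C} :=
        ENNReal.tsum_le_tsum fun σ => mOpen_lastSelected_le hP σ (hC.1 _ σ.2)
    _ < 2⁻¹ ^ n := (hC.2 n hn).2

end PullbackTest

section RecursivelyEnumerable

lemma REPred.comp {α β : Type*} [Primcodable α] [Primcodable β] {p : β → Prop} (hp : REPred p)
    {g : α → β} (hg : Computable g) : REPred fun a => p (g a) :=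
  Partrec.comp hp hg

lemma REPred.exists_mem_part {α β : Type*} [Primcodable α] [Primcodable β] {f : α →. β}
    (hf : Partrec f) {q : α → β → Prop} (hq : REPred fun x : α × β => q x.1 x.2) :
    REPred fun a => ∃ b ∈ f a, q a b :=
  (Partrec.bind hf hq.to₂).dom_re.of_eq fun a => by
    simp [Part.dom_iff_mem, Part.mem_bind_iff, Part.mem_assert_iff]

lemma REPred.and {α : Type*} [Primcodable α] {p q : α → Prop} (hp : REPred p) (hq : REPred q) :
    REPred fun a => p a ∧ q a :=
  (REPred.exists_mem_part (q := fun a _ => q a) hp (hq.comp Computable.fst)).of_eq fun a => by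
    simp [Part.mem_assert_iff]

end RecursivelyEnumerable

section PartialSelection

variable {Γ : Type*} [Inhabited Γ] (O : Set Γ) (f : List Γ →. Bool)

def selectStep (τ : List Γ) (x : ℕ × List Γ) : Part (List Γ) :=
  (Part.assert (τ.getD x.1 default ∈ O) fun _ => Part.some ()).bind fun _ =>
    (f (τ.take x.1)).map fun b => cond b (x.2 ++ [τ.getD x.1 default]) x.2

/-- A partial computable version of `select (isYes f) (τ.take n)`, written as a `Nat.rec` so that
`Partrec.nat_rec` applies. -/
def pselectUpTo (τ : List Γ) (n : ℕ) : Part (List Γ) :=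
  n.rec (Part.some []) fun i acc => acc.bind fun ρ => selectStep O f τ (i, ρ)

variable {O f}

lemma mem_pselectUpTo {τ ρ : List Γ} {n : ℕ} (hn : n ≤ τ.length) :
    ρ ∈ pselectUpTo O f τ n ↔
      strIn O (τ.take n) ∧ (∀ i < n, (f (τ.take i)).Dom) ∧ ρ = select (isYes f) (τ.take n) := by
  induction n generalizing ρ with
  | zero => simp [pselectUpTo, strIn]
  | succ n ih =>
    have htake : τ.take (n + 1) = τ.take n ++ [τ.getD n default] := by
      rw [List.take_add_one, List.getElem?_eq_getElem (by omega),
        List.getD_eq_getElem _ _ (by omega)]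
      rfl
    have hcond : ∀ b : Bool, ∀ ρ' : List Γ,
        cond b (ρ' ++ [τ.getD n default]) ρ' = ρ' ++ if b then [τ.getD n default] else [] := by
      intro b ρ'; cases b <;> simp
    change ρ ∈ (pselectUpTo O f τ n).bind (fun ρ' => selectStep O f τ (n, ρ')) ↔ _
    simp only [Part.mem_bind_iff, ih (by omega : n ≤ τ.length), selectStep, Part.mem_assert_iff,
      Part.mem_map_iff, Part.mem_some_iff, htake, strIn_append, select_append_singleton, hcond]
    constructor
    · rintro ⟨_, ⟨hO, hdom, rfl⟩, _, ⟨hx, -⟩, b, hb, rfl⟩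
      refine ⟨⟨hO, by simpa [strIn] using hx⟩, fun i hi => ?_, by rw [isYes_eq_of_mem hb]⟩
      rcases Nat.lt_succ_iff_lt_or_eq.1 hi with hi | rfl
      exacts [hdom i hi, Part.dom_iff_mem.2 ⟨b, hb⟩]
    · rintro ⟨⟨hO, hx⟩, hdom, rfl⟩
      obtain ⟨b, hb⟩ := Part.dom_iff_mem.1 (hdom n n.lt_succ_self)
      exact ⟨_, ⟨hO, fun i hi => hdom i (by omega), rfl⟩, (), ⟨hx _ List.mem_cons_self, trivial⟩,
        b, hb, by rw [isYes_eq_of_mem hb]⟩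

lemma mem_pselectUpTo_length {τ ρ : List Γ} :
    ρ ∈ pselectUpTo O f τ τ.length ↔
      strIn O τ ∧ (∀ i < τ.length, (f (τ.take i)).Dom) ∧ ρ = select (isYes f) τ := by
  simpa using mem_pselectUpTo (O := O) (f := f) (ρ := ρ) le_rfl

variable [Primcodable Γ]

lemma partrec_pselectUpTo_length (hO : REPred (· ∈ O)) (hf : Partrec f) :
    Partrec fun τ => pselectUpTo O f τ τ.length := by
  have hx : Computable fun y : List Γ × ℕ × List Γ => y.1.getD y.2.1 default :=
    ((Primrec.list_getD default).comp Primrec.fst (Primrec.fst.comp Primrec.snd)).to_comp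
  have hnext : Computable₂ fun (z : (List Γ × ℕ × List Γ) × Unit) (b : Bool) =>
      cond b (z.1.2.2 ++ [z.1.1.getD z.1.2.1 default]) z.1.2.2 :=
    Computable.cond Computable.snd
      ((Primrec.list_concat.to_comp.comp (Computable.snd.comp (Computable.snd.comp
        (Computable.fst.comp Computable.fst))) (hx.comp (Computable.fst.comp Computable.fst))))
      (Computable.snd.comp (Computable.snd.comp (Computable.fst.comp Computable.fst)))
  have htake : Computable fun z : (List Γ × ℕ × List Γ) × Unit => z.1.1.take z.1.2.1 :=
    Primrec.list_take.to_comp.comp (Computable.fst.comp (Computable.snd.comp Computable.fst))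
      (Computable.fst.comp Computable.fst)
  have hstep : Partrec₂ fun (τ : List Γ) (x : ℕ × List Γ) => selectStep O f τ x :=
    Partrec.bind (hO.comp hx) (Partrec.map (hf.comp htake) hnext)
  exact Partrec.nat_rec Computable.list_length (Partrec.const' _) hstep

end PartialSelection

section PullbackTestRE

variable {Γ : Type*} [Inhabited Γ] {O : Set Γ} {f : List Γ →. Bool}
  {C : Set (ℕ × List Γ)}

lemma mem_pullbackTest_iff {x : ℕ × List Γ} : x ∈ pullbackTest O f C ↔
    ∃ ρ ∈ pselectUpTo O f x.2 x.2.length, (x.1, ρ) ∈ C ∧ x.2 ≠ [] ∧ true ∈ f x.2.dropLast := by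
  simp only [pullbackTest, lastSelected, mem_pselectUpTo_length, exists_eq_append_singleton_iff,
    isYes_eq_true]
  constructor
  · rintro ⟨hdom, ⟨hO, -, hne, hyes⟩, hC⟩
    exact ⟨_, ⟨hO, hdom, rfl⟩, hC, hne, hyes⟩
  · rintro ⟨_, ⟨hO, hdom, rfl⟩, hC, hne, hyes⟩
    exact ⟨hdom, ⟨hO, rfl, hne, hyes⟩, hC⟩

variable [Primcodable Γ]

theorem rePred_mem_pullbackTest (hO : REPred (· ∈ O)) (hf : Partrec f) (hC : REPred (· ∈ C)) :
    REPred (· ∈ pullbackTest O f C) := by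
  have hne : REPred fun τ : List Γ => τ ≠ [] :=
    ComputablePred.to_re <| ComputablePred.computable_iff.2
      ⟨fun τ => decide (0 < τ.length),
        (Primrec.nat_lt.comp (Primrec.const 0) Primrec.list_length).decide.to_comp,
        funext fun τ => by simp [List.length_pos_iff]⟩
  have hyes : REPred fun τ : List Γ => true ∈ f τ.dropLast := by
    have hdrop : Computable fun τ : List Γ => τ.dropLast :=
      (Primrec.list_take.comp (Primrec.nat_sub.comp Primrec.list_length (Primrec.const 1))
        Primrec.id).to_comp.of_eq fun τ => List.dropLast_eq_take.symm
    refine (REPred.exists_mem_part (q := fun _ b => b = true) (hf.comp hdrop) ?_).of_eq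
      fun τ => by simp
    exact ComputablePred.to_re <| ComputablePred.computable_iff.2 ⟨_, Computable.snd, rfl⟩
  refine (REPred.exists_mem_part
    (q := fun x ρ => (x.1, ρ) ∈ C ∧ x.2 ≠ [] ∧ true ∈ f x.2.dropLast)
    ((partrec_pselectUpTo_length hO hf).comp Computable.snd)
    ((hC.comp (Computable.pair (Computable.fst.comp Computable.fst) Computable.snd)).and
      ((hne.and hyes).comp (Computable.snd.comp Computable.fst)))).of_eq fun x => ?_
  exact mem_pullbackTest_iff.symm

end PullbackTestRE

section SelectedSubsequence

variable {Γ : Type*} {α : ℕ → Γ}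

lemma length_pre (α : ℕ → Γ) (n : ℕ) : (pre α n).length = n := List.length_ofFn

lemma pre_succ (α : ℕ → Γ) (n : ℕ) : pre α (n + 1) = pre α n ++ [α n] := by
  rw [pre, List.ofFn_succ', List.concat_eq_append]
  rfl

lemma take_pre {i n : ℕ} (h : i ≤ n) : (pre α n).take i = pre α i :=
  List.ext_getElem (by simp [length_pre, h]) fun j _ _ => by simp [pre]

lemma strIn_pre {O : Set Γ} (hα : seqIn O α) (n : ℕ) : strIn O (pre α n) := by
  intro a ha
  obtain ⟨i, rfl⟩ := List.mem_ofFn.1 ha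
  exact hα i

variable {g : List Γ → Bool} {s : ℕ → ℕ}

lemma select_pre_of_forall_eq_false {j k : ℕ} (hjk : j ≤ k)
    (h : ∀ i, j ≤ i → i < k → g (pre α i) = false) : select g (pre α k) = select g (pre α j) := by
  induction k, hjk using Nat.le_induction with
  | base => rfl
  | succ k hjk ih =>
    rw [pre_succ, select_append_singleton, h k hjk k.lt_succ_self,
      ih fun i hi hik => h i hi (by omega)]
    simp

lemma select_pre_eq (hs : StrictMono s) (hsel : ∀ k, g (pre α (s k)) = true)
    (hall : ∀ i, g (pre α i) = true → ∃ k, s k = i) (m : ℕ) :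
    select g (pre α (s m)) = pre (fun k => α (s k)) m := by
  have gap : ∀ {j m}, (∀ k, s k < s m → s k < j) →
      ∀ i, j ≤ i → i < s m → g (pre α i) = false := by
    intro j m hj i hji him
    by_contra hi
    obtain ⟨k, rfl⟩ := hall i (by simpa using hi)
    exact absurd (hj k him) (by omega)
  induction m with
  | zero =>
    exact select_pre_of_forall_eq_false (Nat.zero_le _)
      (gap fun k hk => absurd (hs.lt_iff_lt.1 hk) (Nat.not_lt_zero k))
  | succ m ih =>
    rw [select_pre_of_forall_eq_false (hs m.lt_succ_self)
      (gap fun k hk => Nat.lt_succ_of_le (hs.monotone (Nat.lt_succ_iff.1 (hs.lt_iff_lt.1 hk)))),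
      pre_succ, select_append_singleton, hsel m, ih, pre_succ]
    rfl

lemma select_pre_add_one_eq (hs : StrictMono s) (hsel : ∀ k, g (pre α (s k)) = true)
    (hall : ∀ i, g (pre α i) = true → ∃ k, s k = i) (m : ℕ) :
    select g (pre α (s m + 1)) = pre (fun k => α (s k)) (m + 1) := by
  rw [pre_succ, select_append_singleton, hsel, select_pre_eq hs hsel hall, pre_succ]
  rfl

end SelectedSubsequence

lemma nil_notMem_of_isTestSet {Γ : Type*} {O : Set Γ} {P : Γ → ℝ} {C : Set (ℕ × List Γ)}
    (hC : isTestSet O P C) {n : ℕ} (hn : 1 ≤ n) : (n, []) ∉ C := fun h =>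
  (hC.2 n hn).2.not_ge <|
    calc (2⁻¹ : ℝ≥0∞) ^ n ≤ 1 := pow_le_one' (ENNReal.inv_le_one.2 one_le_two) n
      _ = mOpen P {[]} := by simp
      _ ≤ mOpen P {σ | (n, σ) ∈ C} := mOpen_mono (Set.singleton_subset_iff.2 h)

lemma pre_mem_pullbackTest {Γ : Type*} {O : Set Γ} {f : List Γ →. Bool} {C : Set (ℕ × List Γ)}
    {α : ℕ → Γ} {s : ℕ → ℕ} (hα : seqIn O α) (hdom : ∀ k, (f (pre α k)).Dom)
    (hs : StrictMono s) (hsel : ∀ k, true ∈ f (pre α (s k)))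
    (hall : ∀ i, true ∈ f (pre α i) → ∃ k, s k = i) {n m : ℕ}
    (hm : (n, pre (fun k => α (s k)) (m + 1)) ∈ C) : (n, pre α (s m + 1)) ∈ pullbackTest O f C := by
  have hselect := select_pre_add_one_eq (g := isYes f) hs (fun k => isYes_eq_true.2 (hsel k))
    (fun i hi => hall i (isYes_eq_true.1 hi)) m
  refine ⟨fun i hi => ?_, ⟨strIn_pre hα _, rfl, _, _, pre_succ α _, isYes_eq_true.2 (hsel m)⟩,
    hselect ▸ hm⟩
  rw [take_pre (by simpa [length_pre] using hi.le)]
  exact hdom i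

theorem stmt15_general (Ω : Set ℕ) (hre : REPred (· ∈ Ω))
    (P : ℕ → ℝ) (hP : isProb Ω P)
    (α : ℕ → ℕ) (hα : seqIn Ω α) (hrand : MLRandom Ω P α)
    (f : List ℕ →. Bool) (hfcomp : Partrec f)
    (hdom : ∀ k : ℕ, (f (pre α k)).Dom)
    (s : ℕ → ℕ) (hs : StrictMono s)
    (hsel : ∀ k, true ∈ f (pre α (s k)))
    (hall : ∀ m, true ∈ f (pre α m) → ∃ k, s k = m) :
    MLRandom Ω P (fun k => α (s k)) := by
  rintro C ⟨hCre, hC⟩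
  obtain ⟨n, hn, hαn⟩ :=
    hrand _ ⟨rePred_mem_pullbackTest hre hfcomp hCre, isTestSet_pullbackTest hP hC⟩
  refine ⟨n, hn, ?_⟩
  rintro ⟨_ | m, hm⟩
  · exact nil_notMem_of_isTestSet hC hn hm
  · exact hαn ⟨s m + 1, pre_mem_pullbackTest hα hdom hs hsel hall hm⟩

/-- Closure of ensembles under selection by a partial computable
generalized selection function `f : Ω* →. Bool` (`true` = YES): if `f` is defined on
all prefixes of `α` and selects infinitely many indices, then the subsequence of
selected elements of the Martin-Löf `P`-random `α` is again Martin-Löf `P`-random.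
Here `s : ℕ → ℕ` is the strictly increasing enumeration of the selected indices
(`s k` is the `k`-th index `ℓ` with `f (α↾ℓ) = YES`), and `β k = α (s k)`. -/
theorem stmt15 (Ω : Set ℕ) (hre : REPred (· ∈ Ω)) (hinf : Ω.Infinite)
    (P : ℕ → ℝ) (hP : isProb Ω P)
    (α : ℕ → ℕ) (hα : seqIn Ω α) (hrand : MLRandom Ω P α)
    (f : List ℕ →. Bool) (hfcomp : Partrec f)
    (hdom : ∀ k : ℕ, (f (pre α k)).Dom)
    (s : ℕ → ℕ) (hs : StrictMono s)
    (hsel : ∀ k, true ∈ f (pre α (s k)))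
    (hall : ∀ m, true ∈ f (pre α m) → ∃ k, s k = m) :
    MLRandom Ω P (fun k => α (s k)) :=
  stmt15_general Ω hre P hP α hα hrand f hfcomp hdom s hs hsel hall
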